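/- Let γ be a c.e. numbering with at least two equivalence classes (i.e. there exist two ∼_γ-inequivalent natural numbers). Then for all A, B ⊆ ℕ, A ≤_γ B if and only if A ≤_T B. -/

import Mathlib

open Nat Part

/-- Partial functions on `ℕ` computable relative to an oracle set `A`. -/
inductive OracleRecursiveIn (A : Set ℕ) : (ℕ →. ℕ) → Prop
  | zero : OracleRecursiveIn A (pure 0)
  | succ : OracleRecursiveIn A ↑Nat.succ
  | left : OracleRecursiveIn A ↑fun n : ℕ => n.unpair.1
  | right : OracleRecursiveIn A ↑fun n : ℕ => n.unpair.2
  | oracle : OracleRecursiveIn A ↑fun n : ℕ => A.indicator 1 n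
  | pair {f g} : OracleRecursiveIn A f → OracleRecursiveIn A g →
      OracleRecursiveIn A fun n => Nat.pair <$> f n <*> g n
  | comp {f g} : OracleRecursiveIn A f → OracleRecursiveIn A g →
      OracleRecursiveIn A fun n => g n >>= f
  | prec {f g} : OracleRecursiveIn A f → OracleRecursiveIn A g →
      OracleRecursiveIn A (Nat.unpaired fun a n =>
        n.rec (f a) fun y IH => do let i ← IH; g (Nat.pair a (Nat.pair y i)))
  | rfind {f} : OracleRecursiveIn A f →
      OracleRecursiveIn A fun a => Nat.rfind fun n => (fun m => m = 0) <$> f (Nat.pair a n)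

/-- A total function `f : ℕ → ℕ` is `A`-computable. -/
def OracleComputableIn (A : Set ℕ) (f : ℕ → ℕ) : Prop :=
  OracleRecursiveIn A fun n => Part.some (f n)

/-- A total binary function is `A`-computable. -/
def OracleComputableIn₂ (A : Set ℕ) (h : ℕ → ℕ → ℕ) : Prop :=
  OracleComputableIn A fun n => h n.unpair.1 n.unpair.2

/-- The characteristic function of a set of naturals. -/
noncomputable def chi (A : Set ℕ) : ℕ → ℕ := A.indicator 1

/-- Turing reducibility: `A ≤_T B`. -/
def TuringLE (A B : Set ℕ) : Prop := OracleComputableIn B (chi A)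

/-- `A` is computable. -/
def SetComputable (A : Set ℕ) : Prop := OracleComputableIn ∅ (chi A)

/-- `X` is computably enumerable in `A`: `X` is the domain of a partial
`A`-computable function. -/
def CEIn (A : Set ℕ) (X : Set ℕ) : Prop :=
  ∃ p : ℕ →. ℕ, OracleRecursiveIn A p ∧ X = p.Dom

/-- `A ≤_γ B` (`A` is `(γ,B)`-low): every total `A`-computable function has a
`B`-computable `γ`-lift. -/
def GammaLE (γ : ℕ → ℕ → Prop) (A B : Set ℕ) : Prop :=
  ∀ f : ℕ → ℕ, OracleComputableIn A f →
    ∃ g : ℕ → ℕ, OracleComputableIn B g ∧ ∀ n, γ (f n) (g n)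

/-- `A` is `γ`-low: `A ≤_γ ∅`. -/
def GammaLow (γ : ℕ → ℕ → Prop) (A : Set ℕ) : Prop := GammaLE γ A ∅

/-- `γ` is `(n, A)`-divisible (for finite `n`). -/
def DivisibleFin (γ : ℕ → ℕ → Prop) (n : ℕ) (A : Set ℕ) : Prop :=
  ∃ (x : Fin n → ℕ) (X : Fin n → Set ℕ),
    (∀ i, CEIn A (X i)) ∧
    (∀ i, {m | γ (x i) m} ⊆ X i) ∧
    (∀ i j, i ≠ j → {m | γ (x i) m} ∩ X j = ∅)

/-- `γ` is `(ω, A)`-divisible. -/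
def DivisibleOmega (γ : ℕ → ℕ → Prop) (A : Set ℕ) : Prop :=
  ∃ (x : ℕ → ℕ) (X : ℕ → Set ℕ),
    OracleComputableIn A x ∧
    CEIn A {k : ℕ | k.unpair.2 ∈ X k.unpair.1} ∧
    (∀ i, {m | γ (x i) m} ⊆ X i) ∧
    (∀ i j, i ≠ j → {m | γ (x i) m} ∩ X j = ∅)

/-- `γ` is `A`-precomplete: every partial `A`-computable function has a total
`A`-computable totalization modulo `γ`. -/
def PrecompleteIn (γ : ℕ → ℕ → Prop) (A : Set ℕ) : Prop :=
  ∀ ψ : ℕ →. ℕ, OracleRecursiveIn A ψ →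
    ∃ f : ℕ → ℕ, OracleComputableIn A f ∧ ∀ n, ∀ y ∈ ψ n, γ y (f n)

/-- `γ` is a c.e. numbering. -/
def CENumbering (γ : ℕ → ℕ → Prop) : Prop :=
  CEIn ∅ {k : ℕ | γ k.unpair.1 k.unpair.2}

/-- The `e`-th partial computable function. -/
def phi (e : ℕ) : ℕ →. ℕ := (Denumerable.ofNat Nat.Partrec.Code e).eval

/-- The `e`-th computably enumerable set. -/
def Wset (e : ℕ) : Set ℕ := (phi e).Dom

/-- The halting set `∅'`. -/
def halting : Set ℕ := {e : ℕ | (phi e e).Dom}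

/-!
A Turing reduction of `A` to `B` makes every `A`-computable function `B`-computable, so it is its
own `γ`-lift. Conversely, fix `γ`-inequivalent `x` and `y`. Their classes are disjoint c.e. sets,
so a single partial computable function outputs `1` on the class of `x` and `0` on that of `y`.
A `B`-computable lift of the `A`-computable function `n ↦ if n ∈ A then x else y` lands in the
right class at every `n`, and composing it with that separator computes `chi A` from `B`.
-/

theorem indicator_one_part_eq_some (A : Set ℕ) :
    (fun n => A.indicator (1 : ℕ → Part ℕ) n) = fun n => Part.some (A.indicator 1 n) := by
  classical
  funext n
  by_cases hn : n ∈ A <;> simp [hn] <;> rfl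

namespace OracleRecursiveIn

theorem of_partrec {A : Set ℕ} {f : ℕ →. ℕ} (hf : Nat.Partrec f) : OracleRecursiveIn A f := by
  induction hf with
  | zero => exact .zero
  | succ => exact .succ
  | left => exact .left
  | right => exact .right
  | pair _ _ ih₁ ih₂ => exact .pair ih₁ ih₂
  | comp _ _ ih₁ ih₂ => exact .comp ih₁ ih₂
  | prec _ _ ih₁ ih₂ => exact .prec ih₁ ih₂
  | rfind _ ih => exact .rfind ih

theorem partrec_of_empty {f : ℕ →. ℕ} (hf : OracleRecursiveIn ∅ f) : Nat.Partrec f := by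
  induction hf with
  | zero => exact .zero
  | succ => exact .succ
  | left => exact .left
  | right => exact .right
  | oracle =>
    rw [indicator_one_part_eq_some]
    simp only [Set.indicator_empty]
    exact Nat.Partrec.zero
  | pair _ _ ih₁ ih₂ => exact .pair ih₁ ih₂
  | comp _ _ ih₁ ih₂ => exact .comp ih₁ ih₂
  | prec _ _ ih₁ ih₂ => exact .prec ih₁ ih₂
  | rfind _ ih => exact .rfind ih

theorem of_turingLE {A B : Set ℕ} (hAB : TuringLE A B) {f : ℕ →. ℕ}
    (hf : OracleRecursiveIn A f) : OracleRecursiveIn B f := by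
  induction hf with
  | zero => exact .zero
  | succ => exact .succ
  | left => exact .left
  | right => exact .right
  | oracle => rw [indicator_one_part_eq_some]; exact hAB
  | pair _ _ ih₁ ih₂ => exact .pair ih₁ ih₂
  | comp _ _ ih₁ ih₂ => exact .comp ih₁ ih₂
  | prec _ _ ih₁ ih₂ => exact .prec ih₁ ih₂
  | rfind _ ih => exact .rfind ih

end OracleRecursiveIn

theorem oracleComputableIn_chi (A : Set ℕ) : OracleComputableIn A (chi A) := by
  have := OracleRecursiveIn.oracle (A := A)
  rwa [indicator_one_part_eq_some] at this

theorem OracleComputableIn.of_partrec_comp {A : Set ℕ} {g c : ℕ → ℕ} {h : ℕ →. ℕ}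
    (hg : OracleComputableIn A g) (hh : Nat.Partrec h) (hc : ∀ n, h (g n) = Part.some (c n)) :
    OracleComputableIn A c := by
  have heq : (fun n => Part.some (g n) >>= h) = fun n => Part.some (c n) :=
    funext fun n => (Part.bind_some _ _).trans (hc n)
  unfold OracleComputableIn
  exact heq ▸ OracleRecursiveIn.comp (OracleRecursiveIn.of_partrec hh) hg

theorem OracleComputableIn.comp_computable {A : Set ℕ} {g : ℕ → ℕ} {k : ℕ → ℕ}
    (hg : OracleComputableIn A g) (hk : Computable k) : OracleComputableIn A (k ∘ g) :=
  hg.of_partrec_comp (Partrec.nat_iff.1 hk) fun _ => rfl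

theorem ceIn_empty_iff {X : Set ℕ} : CEIn ∅ X ↔ ∃ p : ℕ →. ℕ, Nat.Partrec p ∧ X = p.Dom :=
  ⟨fun ⟨p, hp, hX⟩ => ⟨p, hp.partrec_of_empty, hX⟩,
    fun ⟨p, hp, hX⟩ => ⟨p, .of_partrec hp, hX⟩⟩

theorem CENumbering.ceIn_class {γ : ℕ → ℕ → Prop} (hγ : CENumbering γ) (x : ℕ) :
    CEIn ∅ {m | γ x m} := by
  obtain ⟨q, hq, hdom⟩ := ceIn_empty_iff.1 hγ
  refine ceIn_empty_iff.2 ⟨fun m => q (Nat.pair x m), ?_, ?_⟩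
  · exact Partrec.nat_iff.1 <| (Partrec.nat_iff.2 hq).comp
      (Primrec₂.natPair.comp (Primrec.const x) Primrec.id).to_comp
  · ext m
    have := Set.ext_iff.1 hdom (Nat.pair x m)
    simp only [Set.mem_ofPred_eq, Nat.unpair_pair] at this
    exact this

theorem exists_partrec_separator {X Y : Set ℕ} (hX : CEIn ∅ X) (hY : CEIn ∅ Y)
    (hXY : Disjoint X Y) :
    ∃ h : ℕ →. ℕ, Nat.Partrec h ∧ ∀ m, (m ∈ X → h m = Part.some 1) ∧
      (m ∈ Y → h m = Part.some 0) := by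
  obtain ⟨p, hp, rfl⟩ := ceIn_empty_iff.1 hX
  obtain ⟨r, hr, rfl⟩ := ceIn_empty_iff.1 hY
  have hp1 : Partrec fun m => (p m).map fun _ => 1 :=
    (Partrec.nat_iff.2 hp).map ((Computable.const 1).comp Computable.snd).to₂
  have hr0 : Partrec fun m => (r m).map fun _ => 0 :=
    (Partrec.nat_iff.2 hr).map ((Computable.const 0).comp Computable.snd).to₂
  obtain ⟨h, hh, hmem⟩ := Partrec.merge hp1 hr0 fun _ _ ha _ hb =>
    (Set.disjoint_left.1 hXY ha.fst hb.fst).elim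
  refine ⟨h, Partrec.nat_iff.1 hh, fun m => ⟨fun hm => ?_, fun hm => ?_⟩⟩
  · exact Part.eq_some_iff.2 <| (hmem m 1).2 <| Or.inl <| Part.mem_map _ (Part.get_mem hm)
  · exact Part.eq_some_iff.2 <| (hmem m 0).2 <| Or.inr <| Part.mem_map _ (Part.get_mem hm)

theorem gammaLE_of_turingLE {γ : ℕ → ℕ → Prop} (hγ : ∀ x, γ x x) {A B : Set ℕ}
    (hAB : TuringLE A B) : GammaLE γ A B :=
  fun f hf => ⟨f, OracleRecursiveIn.of_turingLE hAB hf, fun n => hγ (f n)⟩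

theorem turingLE_of_gammaLE {γ : ℕ → ℕ → Prop} (hγ : Equivalence γ) (hce : CENumbering γ)
    {x y : ℕ} (hxy : ¬ γ x y) {A B : Set ℕ} (hAB : GammaLE γ A B) : TuringLE A B := by
  obtain ⟨sep, hsep, hsep_spec⟩ := exists_partrec_separator (hce.ceIn_class x)
    (hce.ceIn_class y) (Set.disjoint_left.2 fun _ hx hy => hxy (hγ.trans hx (hγ.symm hy)))
  have hk : Computable fun t : ℕ => if t = 1 then x else y :=
    (Primrec.ite (Primrec.eq.comp Primrec.id (Primrec.const 1))
      (Primrec.const x) (Primrec.const y)).to_comp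
  obtain ⟨g, hg, hlift⟩ := hAB _ ((oracleComputableIn_chi A).comp_computable hk)
  refine hg.of_partrec_comp hsep fun n => ?_
  by_cases hn : n ∈ A
  · have hchi : chi A n = 1 := by simp [chi, hn]
    simpa [hchi] using (hsep_spec (g n)).1 (by simpa [hchi] using hlift n)
  · have hchi : chi A n = 0 := by simp [chi, hn]
    simpa [hchi] using (hsep_spec (g n)).2 (by simpa [hchi] using hlift n)

/-- For a c.e. numbering `γ` with at least two equivalence
classes, `A ≤_γ B` iff `A ≤_T B`. -/
theorem gammaLE_iff_turingLE (γ : ℕ → ℕ → Prop) (hγ : Equivalence γ)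
    (hce : CENumbering γ) (hclasses : ∃ x y : ℕ, ¬ γ x y)
    (A B : Set ℕ) : GammaLE γ A B ↔ TuringLE A B := by
  obtain ⟨x, y, hxy⟩ := hclasses
  exact ⟨turingLE_of_gammaLE hγ hce hxy, gammaLE_of_turingLE hγ.refl⟩
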